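/- arXiv:2604.02290 — 3 statements merged into one kernel-verified Lean document; each statement's English description precedes it below -/
import Mathlib

section
/- Fix m ∈ ℝᵈ and v ∈ ℝᵈ with nonnegative entries. The map t ↦ ⟨m, g_t(m,v)⟩ is differentiable on (0,∞) and satisfies, for every t > 0, d/dt ⟨m, g_t(m,v)⟩ ≤ ( −(1−α)/(e^{(1−α)t} − 1) + ((1−β)/2) · 1/(e^{(1−β)t} − 1) ) · ⟨m, g_t(m,v)⟩. (Time-derivative bound, equation (A.14) in the proof of Theorem 1.) -/
open MeasureTheory Filter
open scoped RealInnerProductSpace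

/-- The Adam update direction `g_t(m, v)`, defined coordinatewise by
`g_t(m,v)_i = (m_i/(1−e^{−(1−α)t})) / (√(v_i/(1−e^{−(1−β)t})) + ε)`. -/
noncomputable def adamG (α β ε : ℝ) (d : ℕ) (t : ℝ) (m v : EuclideanSpace ℝ (Fin d)) :
    EuclideanSpace ℝ (Fin d) :=
  WithLp.toLp 2 (fun i => (m i / (1 - Real.exp (-(1 - α) * t))) /
    (Real.sqrt (v i / (1 - Real.exp (-(1 - β) * t))) + ε))

/-!
Write `a(t) = 1 - e^{-(1-α)t}` and `b(t) = 1 - e^{-(1-β)t}`. The `i`-th term of `⟨m, g_t⟩` is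
`m_i² · a⁻¹ · (√v_i · b^{-1/2} + ε)⁻¹`, a product of nonnegative factors. The logarithmic
derivative of `a⁻¹` is exactly `-a'/a = -(1-α)/(e^{(1-α)t} - 1)`; that of the second factor is
`(b'/2b) · √v_i b^{-1/2} / (√v_i b^{-1/2} + ε) ≤ b'/2b = ((1-β)/2)/(e^{(1-β)t} - 1)`.
A differential inequality `f' ≤ k f` survives products of nonnegative functions (adding the
`k`s), nonnegative scalings and sums, which gives the bound.
-/

open Real

def HasDerivLeMulAt (f : ℝ → ℝ) (k t : ℝ) : Prop :=
  ∃ D, HasDerivAt f D t ∧ D ≤ k * f t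

namespace HasDerivLeMulAt

variable {f g : ℝ → ℝ} {k l t : ℝ}

theorem of_hasDerivAt (hf : HasDerivAt f (k * f t) t) : HasDerivLeMulAt f k t :=
  ⟨_, hf, le_rfl⟩

theorem const_mul (hf : HasDerivLeMulAt f k t) {c : ℝ} (hc : 0 ≤ c) :
    HasDerivLeMulAt (fun s => c * f s) k t := by
  obtain ⟨D, hD, hDk⟩ := hf
  refine ⟨c * D, hD.const_mul c, ?_⟩
  calc c * D ≤ c * (k * f t) := mul_le_mul_of_nonneg_left hDk hc
    _ = k * (c * f t) := by ring

theorem mul (hf : HasDerivLeMulAt f k t) (hg : HasDerivLeMulAt g l t)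
    (hf0 : 0 ≤ f t) (hg0 : 0 ≤ g t) :
    HasDerivLeMulAt (fun s => f s * g s) (k + l) t := by
  obtain ⟨D, hD, hDk⟩ := hf
  obtain ⟨E, hE, hEl⟩ := hg
  refine ⟨D * g t + f t * E, hD.mul hE, ?_⟩
  calc D * g t + f t * E ≤ k * f t * g t + f t * (l * g t) := by
        gcongr
    _ = (k + l) * (f t * g t) := by ring

theorem add (hf : HasDerivLeMulAt f k t) (hg : HasDerivLeMulAt g k t) :
    HasDerivLeMulAt (fun s => f s + g s) k t := by
  obtain ⟨D, hD, hDk⟩ := hf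
  obtain ⟨E, hE, hEk⟩ := hg
  exact ⟨D + E, hD.add hE, by rw [mul_add]; exact add_le_add hDk hEk⟩

theorem sum {ι : Type*} {u : Finset ι} {F : ι → ℝ → ℝ}
    (h : ∀ i ∈ u, HasDerivLeMulAt (F i) k t) :
    HasDerivLeMulAt (fun s => ∑ i ∈ u, F i s) k t := by
  classical
  induction u using Finset.induction_on with
  | empty => exact ⟨0, by simpa using hasDerivAt_const t (0 : ℝ), by simp⟩
  | insert i u hi ih =>
    simp only [Finset.sum_insert hi]
    exact (h i (u.mem_insert_self i)).add (ih fun j hj => h j (Finset.mem_insert_of_mem hj))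

end HasDerivLeMulAt

theorem hasDerivAt_one_sub_exp_neg_mul (κ : ℝ) {t : ℝ} (ht : t ≠ 0) :
    HasDerivAt (fun s => 1 - exp (-κ * s))
      (κ / (exp (κ * t) - 1) * (1 - exp (-κ * t))) t := by
  have hD : HasDerivAt (fun s => 1 - exp (-κ * s)) (κ * exp (-κ * t)) t := by
    simpa [mul_comm] using (((hasDerivAt_id t).const_mul (-κ)).exp).const_sub 1
  convert hD using 1
  rcases eq_or_ne κ 0 with rfl | hκ
  · simp
  have hE : exp (κ * t) - 1 ≠ 0 := by
    rw [sub_ne_zero, Ne, exp_eq_one_iff]; exact mul_ne_zero hκ ht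
  rw [neg_mul, exp_neg]
  field_simp

theorem HasDerivAt.inv_of_eq_mul {f : ℝ → ℝ} {k t : ℝ} (hf : HasDerivAt f (k * f t) t)
    (h0 : f t ≠ 0) : HasDerivAt (fun s => (f s)⁻¹) (-k * (f t)⁻¹) t :=
  (hf.fun_inv h0).congr_deriv (by field_simp)

theorem HasDerivAt.sqrt_of_eq_mul {f : ℝ → ℝ} {k t : ℝ} (hf : HasDerivAt f (k * f t) t)
    (h0 : 0 < f t) : HasDerivAt (fun s => √(f s)) (k / 2 * √(f t)) t := by
  convert hf.sqrt h0.ne' using 1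
  field_simp
  rw [sq_sqrt h0.le]

theorem hasDerivLeMulAt_inv_add_const {r : ℝ → ℝ} {k t ε : ℝ}
    (hr : HasDerivAt r (-k * r t) t) (hk : 0 ≤ k) (hr0 : 0 ≤ r t) (hε : 0 < ε) :
    HasDerivLeMulAt (fun s => (r s + ε)⁻¹) k t := by
  have hq : 0 < r t + ε := by linarith
  refine ⟨_, (hr.add_const ε).fun_inv hq.ne', ?_⟩
  calc -(-k * r t) / (r t + ε) ^ 2 = k * (r t / (r t + ε)) * (r t + ε)⁻¹ := by
        field_simp
    _ ≤ k * 1 * (r t + ε)⁻¹ := by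
        gcongr
        exact div_le_one_of_le₀ (by linarith) hq.le
    _ = k * (r t + ε)⁻¹ := by ring

theorem one_sub_exp_neg_mul_pos {κ t : ℝ} (hκ : 0 < κ) (ht : 0 < t) : 0 < 1 - exp (-κ * t) := by
  rw [sub_pos, exp_lt_one_iff, neg_mul, neg_lt_zero]
  exact mul_pos hκ ht

theorem hasDerivAt_inv_one_sub_exp_neg_mul {κ t : ℝ} (hκ : 0 < κ) (ht : 0 < t) :
    HasDerivAt (fun s => (1 - exp (-κ * s))⁻¹)
      (-(κ / (exp (κ * t) - 1)) * (1 - exp (-κ * t))⁻¹) t :=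
  (hasDerivAt_one_sub_exp_neg_mul κ ht.ne').inv_of_eq_mul (one_sub_exp_neg_mul_pos hκ ht).ne'

theorem hasDerivLeMulAt_inv_mul_inv_sqrt_one_sub_exp_add {κ t c ε : ℝ} (hκ : 0 < κ) (ht : 0 < t)
    (hc : 0 ≤ c) (hε : 0 < ε) :
    HasDerivLeMulAt (fun s => (c * (√(1 - exp (-κ * s)))⁻¹ + ε)⁻¹)
      (κ / (exp (κ * t) - 1) / 2) t := by
  have hb := one_sub_exp_neg_mul_pos hκ ht
  have hr := ((hasDerivAt_one_sub_exp_neg_mul κ ht.ne').sqrt_of_eq_mul hb).inv_of_eq_mul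
    (sqrt_pos.2 hb).ne'
  refine hasDerivLeMulAt_inv_add_const ((hr.const_mul c).congr_deriv (by ring)) ?_ ?_ hε
  · have : 0 < exp (κ * t) - 1 := by
      rw [sub_pos, one_lt_exp_iff]; exact mul_pos hκ ht
    positivity
  · positivity

theorem inner_adamG_eq_sum {α β ε : ℝ} {d : ℕ} (t : ℝ) {m v : EuclideanSpace ℝ (Fin d)}
    (hv : ∀ i, 0 ≤ v i) :
    ⟪m, adamG α β ε d t m v⟫ = ∑ i, m i ^ 2 * ((1 - exp (-(1 - α) * t))⁻¹ *
      (√(v i) * (√(1 - exp (-(1 - β) * t)))⁻¹ + ε)⁻¹) := by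
  simp only [adamG, PiLp.inner_apply, RCLike.inner_apply, conj_trivial, sqrt_div (hv _)]
  refine Finset.sum_congr rfl fun i _ => ?_
  ring

theorem adamG_time_derivative_bound_general
    (d : ℕ) (α β ε : ℝ)
    (hα : α ∈ Set.Ico (0 : ℝ) 1) (hβ : β ∈ Set.Ico (0 : ℝ) 1) (hε : 0 < ε)
    (m v : EuclideanSpace ℝ (Fin d)) (hv : ∀ i, 0 ≤ v i) :
    ∀ t > (0 : ℝ), ∃ D : ℝ,
      HasDerivAt (fun s => ⟪m, adamG α β ε d s m v⟫) D t ∧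
      D ≤ (-(1 - α) / (Real.exp ((1 - α) * t) - 1)
          + ((1 - β) / 2) * (1 / (Real.exp ((1 - β) * t) - 1)))
        * ⟪m, adamG α β ε d t m v⟫ := by
  intro t ht
  have hα1 : 0 < 1 - α := sub_pos.2 hα.2
  have hβ1 : 0 < 1 - β := sub_pos.2 hβ.2
  have hk : -(1 - α) / (exp ((1 - α) * t) - 1) + (1 - β) / 2 * (1 / (exp ((1 - β) * t) - 1))
      = -((1 - α) / (exp ((1 - α) * t) - 1)) + (1 - β) / (exp ((1 - β) * t) - 1) / 2 := by ring
  simp only [inner_adamG_eq_sum _ hv, hk]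
  refine HasDerivLeMulAt.sum fun i _ => HasDerivLeMulAt.const_mul ?_ (sq_nonneg _)
  exact HasDerivLeMulAt.mul
    (.of_hasDerivAt (hasDerivAt_inv_one_sub_exp_neg_mul hα1 ht))
    (hasDerivLeMulAt_inv_mul_inv_sqrt_one_sub_exp_add hβ1 ht (sqrt_nonneg _) hε)
    (inv_nonneg.2 (one_sub_exp_neg_mul_pos hα1 ht).le) (by positivity)

/-- **Time-derivative bound (equation (A.14))** in the proof of Theorem 1. Fix `m ∈ ℝᵈ` and an
entrywise nonnegative `v ∈ ℝᵈ`. Then `t ↦ ⟨m, g_t(m,v)⟩` is differentiable on `(0,∞)` and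
its derivative is at most
`(−(1−α)/(e^{(1−α)t} − 1) + ((1−β)/2)·1/(e^{(1−β)t} − 1)) · ⟨m, g_t(m,v)⟩`. -/
theorem adamG_time_derivative_bound
    (d : ℕ) (α β ε η : ℝ)
    (hα : α ∈ Set.Ico (0 : ℝ) 1) (hβ : β ∈ Set.Ico (0 : ℝ) 1) (hε : 0 < ε) (hη : 0 < η)
    (m v : EuclideanSpace ℝ (Fin d)) (hv : ∀ i, 0 ≤ v i) :
    ∀ t > (0 : ℝ), ∃ D : ℝ,
      HasDerivAt (fun s => ⟪m, adamG α β ε d s m v⟫) D t ∧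
      D ≤ (-(1 - α) / (Real.exp ((1 - α) * t) - 1)
          + ((1 - β) / 2) * (1 / (Real.exp ((1 - β) * t) - 1)))
        * ⟪m, adamG α β ε d t m v⟫ :=
  adamG_time_derivative_bound_general d α β ε hα hβ hε m v hv
end

section
/- Fix t > 0, m ∈ ℝᵈ, a ∈ ℝᵈ, and v ∈ ℝᵈ with strictly positive entries. Then (1−α) ⟨∇_m ⟨m, g_t(m,v)⟩, a − m⟩ + (1−β) ⟨∇_v ⟨m, g_t(m,v)⟩, a² − v⟩ ≤ 2(1−α) ⟨a, g_t(m,v)⟩ − 2(1−α) (1 − (1−β)/(4(1−α))) ⟨m, g_t(m,v)⟩, where a² denotes the coordinatewise square and ∇_m, ∇_v denote the gradients of (m,v) ↦ ⟨m, g_t(m,v)⟩ in the m- and v-variables. (Pointwise inequality, equation (A.15) in the proof of Theorem 1, where a plays the role of the Wasserstein gradient ∇_W F[μ_t](x).) -/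
open MeasureTheory Filter
open scoped RealInnerProductSpace

/-- Coordinatewise square of a vector. -/
noncomputable def vsq (d : ℕ) (w : EuclideanSpace ℝ (Fin d)) : EuclideanSpace ℝ (Fin d) :=
  WithLp.toLp 2 (fun i => (w i) ^ 2)

/-! Everything separates over coordinates: with `c₁, c₂` the two bias corrections and
`Sᵢ = √(vᵢ/c₂)`, one has `⟨m, g⟩ = ∑ mᵢ²/(c₁(Sᵢ + ε))`, so `∇ₘ⟨m, g⟩ = 2g` and
`∂_{vᵢ}⟨m, g⟩ = -mᵢgᵢ/(2Dᵢ)` with `Dᵢ = c₂Sᵢ(Sᵢ + ε) = vᵢ + εc₂Sᵢ ≥ vᵢ`. In each coordinate the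
right-hand side minus the left-hand side is then `(1-β) mᵢgᵢ (Dᵢ - vᵢ + aᵢ²)/(2Dᵢ) ≥ 0`. -/

theorem hasGradientAt_sum_apply {ι : Type*} [Fintype ι] {φ : ι → ℝ → ℝ} {φ' : ι → ℝ}
    {x : EuclideanSpace ℝ ι} (h : ∀ i, HasDerivAt (φ i) (φ' i) (x i)) :
    HasGradientAt (fun y : EuclideanSpace ℝ ι => ∑ i, φ i (y i)) (WithLp.toLp 2 φ') x := by
  rw [hasGradientAt_iff_hasFDerivAt]
  have hF : HasFDerivAt (fun y : EuclideanSpace ℝ ι => ∑ i, φ i (y i))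
      (∑ i, φ' i • EuclideanSpace.proj (𝕜 := ℝ) i) x :=
    HasFDerivAt.fun_sum fun i _ =>
      (h i).comp_hasFDerivAt x (EuclideanSpace.proj (𝕜 := ℝ) (ι := ι) i).hasFDerivAt
  refine hF.congr_fderiv ?_
  ext y
  simp [PiLp.inner_apply, mul_comm]

theorem hasDerivAt_div_sqrt_div_add (k : ℝ) {c y ε : ℝ} (hc : 0 < c) (hy : 0 < y) (hε : 0 ≤ ε) :
    HasDerivAt (fun x => k / (√(x / c) + ε))
      (-(k / (√(y / c) + ε)) / (2 * (y + ε * c * √(y / c)))) y := by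
  have hD : y + ε * c * √(y / c) = c * √(y / c) * (√(y / c) + ε) := by
    have : c * √(y / c) ^ 2 = y := by rw [Real.sq_sqrt (div_pos hy hc).le]; field_simp
    linear_combination -this
  have hsqrt : HasDerivAt (fun x => √(x / c)) (1 / (2 * √(y / c)) * (1 / c)) y := by
    refine (Real.hasDerivAt_sqrt (div_pos hy hc).ne').comp y ?_
    simpa using (hasDerivAt_id y).div_const c
  refine ((hasDerivAt_const y k).div (hsqrt.add_const ε) (by positivity)).congr_deriv ?_
  rw [hD]
  field_simp
  ring

theorem coord_pointwise_inequality {κ ρ a m g v D : ℝ} (hκ : 0 < κ) (hρ : 0 ≤ ρ) (hmg : 0 ≤ m * g)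
    (hD : 0 < D) (hvD : v ≤ D) :
    κ * (2 * g * (a - m)) + ρ * (-(m * g) / (2 * D) * (a ^ 2 - v))
      ≤ 2 * κ * (g * a) - 2 * κ * (1 - ρ / (4 * κ)) * (g * m) := by
  have key : 2 * κ * (g * a) - 2 * κ * (1 - ρ / (4 * κ)) * (g * m)
      - (κ * (2 * g * (a - m)) + ρ * (-(m * g) / (2 * D) * (a ^ 2 - v)))
      = ρ * (m * g) * (D - v + a ^ 2) / (2 * D) := by
    field_simp
    ring
  have hslack : 0 ≤ ρ * (m * g) * (D - v + a ^ 2) / (2 * D) := by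
    have : 0 ≤ D - v + a ^ 2 := by nlinarith [sq_nonneg a]
    positivity
  linarith

noncomputable def biasCorrection (γ t : ℝ) : ℝ := 1 - Real.exp (-(1 - γ) * t)

theorem biasCorrection_pos {γ t : ℝ} (hγ : γ < 1) (ht : 0 < t) : 0 < biasCorrection γ t := by
  have : -(1 - γ) * t < 0 := by nlinarith
  simpa [biasCorrection] using Real.exp_lt_one_iff.mpr this

section adamG

variable {α β ε t : ℝ} {d : ℕ}

theorem adamG_apply (m v : EuclideanSpace ℝ (Fin d)) (i : Fin d) :
    adamG α β ε d t m v i = m i / biasCorrection α t / (√(v i / biasCorrection β t) + ε) :=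
  rfl

theorem hasGradientAt_inner_adamG_left (m v : EuclideanSpace ℝ (Fin d)) :
    HasGradientAt (fun m' => ⟪m', adamG α β ε d t m' v⟫) (2 • adamG α β ε d t m v) m := by
  convert hasGradientAt_sum_apply (x := m)
    (φ := fun i x => x / biasCorrection α t / (√(v i / biasCorrection β t) + ε) * x)
    (φ' := fun i => 2 * adamG α β ε d t m v i) fun i => ?_ using 1
  · ext m'
    simp only [PiLp.inner_apply, RCLike.inner_apply, conj_trivial, adamG_apply]
  · ext i
    simp
  · refine ((((hasDerivAt_id' (m i)).div_const _).div_const _).mul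
      (hasDerivAt_id' (m i))).congr_deriv ?_
    rw [adamG_apply]
    ring

theorem hasGradientAt_inner_adamG_right (hβ : β < 1) (ht : 0 < t) (hε : 0 ≤ ε)
    (m : EuclideanSpace ℝ (Fin d)) {v : EuclideanSpace ℝ (Fin d)} (hv : ∀ i, 0 < v i) :
    HasGradientAt (fun v' => ⟪m, adamG α β ε d t m v'⟫)
      (WithLp.toLp 2 fun i => -(adamG α β ε d t m v i * m i) /
        (2 * (v i + ε * biasCorrection β t * √(v i / biasCorrection β t)))) v := by
  convert hasGradientAt_sum_apply (x := v)
    (φ := fun i y => m i / biasCorrection α t * m i / (√(y / biasCorrection β t) + ε))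
    fun i => hasDerivAt_div_sqrt_div_add _ (biasCorrection_pos hβ ht) (hv i) hε using 1
  · ext v'
    simp only [PiLp.inner_apply, RCLike.inner_apply, conj_trivial, adamG_apply, div_mul_eq_mul_div]
  · ext i
    simp only [adamG_apply, div_mul_eq_mul_div]

end adamG

theorem adamG_pointwise_inequality_general
    (d : ℕ) (α β ε : ℝ)
    (hα : α ∈ Set.Ico (0 : ℝ) 1) (hβ : β ∈ Set.Ico (0 : ℝ) 1) (hε : 0 < ε)
    (t : ℝ) (ht : 0 < t)
    (m a v : EuclideanSpace ℝ (Fin d)) (hv : ∀ i, 0 < v i) :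
    (1 - α) * ⟪gradient (fun m' : EuclideanSpace ℝ (Fin d) =>
        ⟪m', adamG α β ε d t m' v⟫) m, a - m⟫
    + (1 - β) * ⟪gradient (fun v' : EuclideanSpace ℝ (Fin d) =>
        ⟪m, adamG α β ε d t m v'⟫) v, vsq d a - v⟫
    ≤ 2 * (1 - α) * ⟪a, adamG α β ε d t m v⟫
      - 2 * (1 - α) * (1 - (1 - β) / (4 * (1 - α))) * ⟪m, adamG α β ε d t m v⟫ := by
  have hc₁ := biasCorrection_pos hα.2 ht
  have hc₂ := biasCorrection_pos hβ.2 ht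
  rw [(hasGradientAt_inner_adamG_left m v).gradient,
    (hasGradientAt_inner_adamG_right hβ.2 ht hε.le m hv).gradient]
  simp only [PiLp.inner_apply, RCLike.inner_apply, conj_trivial, PiLp.sub_apply, PiLp.smul_apply,
    vsq, Finset.mul_sum, ← Finset.sum_add_distrib, ← Finset.sum_sub_distrib]
  refine Finset.sum_le_sum fun i _ => ?_
  have hmg : 0 ≤ m i * adamG α β ε d t m v i := by
    rw [adamG_apply, ← mul_div_assoc, ← mul_div_assoc, ← sq]
    positivity
  have hvD : v i ≤ v i + ε * biasCorrection β t * √(v i / biasCorrection β t) := by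
    simp only [le_add_iff_nonneg_right]
    positivity
  have hcoord := coord_pointwise_inequality (a := a i) (sub_pos.mpr hα.2)
    (sub_nonneg.mpr hβ.2.le) hmg ((hv i).trans_le hvD) hvD
  linear_combination hcoord

/-- **Pointwise inequality (equation (A.15))** in the proof of Theorem 1. Fix `t > 0`, `m`,
`a`, and an entrywise strictly positive `v`. Then
`(1−α)⟨∇ₘ⟨m, g_t(m,v)⟩, a − m⟩ + (1−β)⟨∇ᵥ⟨m, g_t(m,v)⟩, a² − v⟩
  ≤ 2(1−α)⟨a, g_t(m,v)⟩ − 2(1−α)(1 − (1−β)/(4(1−α)))⟨m, g_t(m,v)⟩`,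
where `a²` is the coordinatewise square and `∇ₘ`, `∇ᵥ` are the gradients of
`(m,v) ↦ ⟨m, g_t(m,v)⟩` in the `m`- and `v`-variables (here `a` plays the role of
the Wasserstein gradient `∇_W F[μ_t](x)`). -/
theorem adamG_pointwise_inequality
    (d : ℕ) (α β ε η : ℝ)
    (hα : α ∈ Set.Ico (0 : ℝ) 1) (hβ : β ∈ Set.Ico (0 : ℝ) 1) (hε : 0 < ε) (hη : 0 < η)
    (t : ℝ) (ht : 0 < t)
    (m a v : EuclideanSpace ℝ (Fin d)) (hv : ∀ i, 0 < v i) :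
    (1 - α) * ⟪gradient (fun m' : EuclideanSpace ℝ (Fin d) =>
        ⟪m', adamG α β ε d t m' v⟫) m, a - m⟫
    + (1 - β) * ⟪gradient (fun v' : EuclideanSpace ℝ (Fin d) =>
        ⟪m, adamG α β ε d t m v'⟫) v, vsq d a - v⟫
    ≤ 2 * (1 - α) * ⟪a, adamG α β ε d t m v⟫
      - 2 * (1 - α) * (1 - (1 - β) / (4 * (1 - α))) * ⟪m, adamG α β ε d t m v⟫ :=
  adamG_pointwise_inequality_general d α β ε hα hβ hε t ht m a v hv
end

section
/- Let f : ℝᵈ → ℝ be continuously differentiable and bounded below, let α, β ∈ [0,1) satisfy 4α − β < 3, and let (x, m, v) : [0,∞) → ℝᵈ × ℝᵈ × ℝᵈ be a solution of the Adam ODE system with initial condition (x₀, 0, 0), differentiable on (0,∞), such that every entry of v(t) is strictly positive for all t > 0. If x(t) converges to a point x* ∈ ℝᵈ as t → ∞, then ∇f(x*) = 0; equivalently, the limiting Dirac measure δ_{x*} is a critical point of the potential energy functional F_f[μ] = ∫ f dμ, whose Wasserstein gradient is ∇f. (Theorem 1 in the Dirac-measure case, via the equivalence of Propositions 1 and 2.)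 -/
open MeasureTheory Filter
open scoped RealInnerProductSpace

/-!
Along an Adam trajectory with `x(t) → x*`, the forcing terms `∇f(x(t))` and `∇f(x(t))²` of the
linear relaxation equations for `m` and `v` converge, so `m → ∇f(x*)` and `v → ∇f(x*)²`
(integrating factor `e^{ct}`). The bias corrections tend to `1`, hence the velocity `ẋ(t)` tends
to `-η ∇f(x*) / (|∇f(x*)| + ε)` coordinatewise. A convergent curve can only have a limiting
velocity `0` (mean value inequality on `[t, t + 1]`), and this vector vanishes only when
`∇f(x*) = 0`.
-/

open Topology Set Real

theorem hasDerivAt_exp_mul_sub (c T s : ℝ) :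
    HasDerivAt (fun s => exp (c * (s - T))) (c * exp (c * (s - T))) s := by
  simpa [mul_comm] using (((hasDerivAt_id s).sub_const T).const_mul c).exp

section

variable {E : Type*} [NormedAddCommGroup E] [NormedSpace ℝ E]

theorem norm_sub_le_of_hasDerivAt_relax {y u : ℝ → E} {L : E} {c δ T t : ℝ} (hc : 0 ≤ c)
    (hTt : T ≤ t) (hy : ∀ s ∈ Icc T t, HasDerivAt y (c • (u s - y s)) s)
    (hu : ∀ s ∈ Ico T t, ‖u s - L‖ ≤ δ) :
    ‖y t - L‖ ≤ exp (-(c * (t - T))) * ‖y T - L‖ + δ * (1 - exp (-(c * (t - T)))) := by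
  set z : ℝ → E := fun s => exp (c * (s - T)) • (y s - L) with hz_def
  have hz : ∀ s ∈ Icc T t, HasDerivAt z ((c * exp (c * (s - T))) • (u s - L)) s := by
    intro s hs
    refine ((hasDerivAt_exp_mul_sub c T s).smul ((hy s hs).sub_const L)).congr_deriv ?_
    module
  have hzt : ‖z t - z T‖ ≤ δ * (exp (c * (t - T)) - 1) := by
    refine image_norm_le_of_norm_deriv_right_le_deriv_boundary (f := fun s => z s - z T)
      (B' := fun s => δ * (c * exp (c * (s - T))))
      (fun s hs => ((hz s hs).sub_const (z T)).continuousAt.continuousWithinAt)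
      (fun s hs => ((hz s (Ico_subset_Icc_self hs)).sub_const (z T)).hasDerivWithinAt)
      (by simp)
      (fun s => ((hasDerivAt_exp_mul_sub c T s).sub_const 1).const_mul δ |>.congr_deriv (by ring))
      (fun s hs => ?_) (right_mem_Icc.2 hTt)
    rw [norm_smul, Real.norm_of_nonneg (by positivity), mul_comm δ]
    exact mul_le_mul_of_nonneg_left (hu s hs) (by positivity)
  have hnorm_zt : ‖z t‖ = exp (c * (t - T)) * ‖y t - L‖ := by
    simp [hz_def, norm_smul, Real.norm_of_nonneg (exp_pos _).le]
  have hzT : z T = y T - L := by simp [hz_def]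
  have hexp : exp (-(c * (t - T))) * exp (c * (t - T)) = 1 := by rw [← exp_add]; simp
  calc ‖y t - L‖ = exp (-(c * (t - T))) * ‖z t‖ := by rw [hnorm_zt, ← mul_assoc, hexp, one_mul]
    _ ≤ exp (-(c * (t - T))) * (‖y T - L‖ + δ * (exp (c * (t - T)) - 1)) := by
        gcongr
        calc ‖z t‖ ≤ ‖z T‖ + ‖z t - z T‖ := norm_le_insert' _ _
          _ ≤ _ := by rw [← hzT]; gcongr
    _ = _ := by linear_combination δ * hexp

theorem tendsto_exp_neg_mul_sub {c : ℝ} (hc : 0 < c) (T : ℝ) :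
    Tendsto (fun t => exp (-(c * (t - T)))) atTop (𝓝 0) := by
  have h : Tendsto (fun t => c * (t - T)) atTop atTop :=
    (tendsto_atTop_add_const_right _ (-T) tendsto_id).const_mul_atTop hc
  exact tendsto_exp_neg_atTop_nhds_zero.comp h

theorem tendsto_of_hasDerivAt_relax {y u : ℝ → E} {L : E} {c : ℝ} (hc : 0 < c)
    (hy : ∀ᶠ t in atTop, HasDerivAt y (c • (u t - y t)) t) (hu : Tendsto u atTop (𝓝 L)) :
    Tendsto y atTop (𝓝 L) := by
  rw [tendsto_iff_norm_sub_tendsto_zero]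
  refine tendsto_order.2 ⟨fun a ha => Eventually.of_forall fun t => ha.trans_le (norm_nonneg _),
    fun δ hδ => ?_⟩
  obtain ⟨T, hT⟩ := eventually_atTop.1
    (hy.and (hu.eventually (Metric.closedBall_mem_nhds L (half_pos hδ))))
  have hdecay : Tendsto (fun t => exp (-(c * (t - T))) * ‖y T - L‖) atTop (𝓝 0) := by
    simpa using (tendsto_exp_neg_mul_sub hc T).mul_const ‖y T - L‖
  filter_upwards [hdecay.eventually (gt_mem_nhds (half_pos hδ)), eventually_ge_atTop T]
    with t hsmall hTt
  have hbound := norm_sub_le_of_hasDerivAt_relax hc.le hTt (fun s hs => (hT s hs.1).1)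
    (u := u) (δ := δ / 2) (fun s hs => by simpa [← dist_eq_norm] using (hT s hs.1).2)
  nlinarith [exp_pos (-(c * (t - T)))]

theorem eq_zero_of_tendsto_of_hasDerivAt_tendsto {x x' : ℝ → E} {a L : E}
    (hx : ∀ᶠ t in atTop, HasDerivAt x (x' t) t) (hx' : Tendsto x' atTop (𝓝 L))
    (hconv : Tendsto x atTop (𝓝 a)) : L = 0 := by
  refine norm_le_zero_iff.1 (le_of_forall_pos_le_add fun δ hδ => ?_)
  have hstep : Tendsto (fun t => x (t + 1) - x t) atTop (𝓝 0) := by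
    simpa using (hconv.comp (tendsto_atTop_add_const_right _ 1 tendsto_id)).sub hconv
  obtain ⟨T, hT⟩ := eventually_atTop.1
    (hx.and (hx'.eventually (Metric.closedBall_mem_nhds L (half_pos hδ))))
  obtain ⟨t, hstep_mem, hTt⟩ := ((hstep.eventually (Metric.closedBall_mem_nhds 0 (half_pos hδ))).and
    (eventually_ge_atTop T)).exists
  have hmvt := norm_image_sub_le_of_norm_deriv_le_segment' (f := fun s => x s - s • L)
    (a := t) (b := t + 1) (C := δ / 2)
    (fun s hs =>
      ((hT s (hTt.trans hs.1)).1.sub ((hasDerivAt_id s).smul_const L)).hasDerivWithinAt)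
    (fun s hs => by simpa [← dist_eq_norm] using (hT s (hTt.trans hs.1)).2)
    (t + 1) (right_mem_Icc.2 (by linarith))
  have hstep_le : ‖x (t + 1) - x t‖ ≤ δ / 2 := by simpa using hstep_mem
  have hdiff : (x (t + 1) - (t + 1) • L) - (x t - t • L) = (x (t + 1) - x t) - L := by
    rw [add_smul, one_smul]; abel
  simp only [hdiff, add_sub_cancel_left, mul_one] at hmvt
  calc ‖L‖ = ‖(x (t + 1) - x t) - ((x (t + 1) - x t) - L)‖ := by rw [sub_sub_cancel]
    _ ≤ ‖x (t + 1) - x t‖ + ‖(x (t + 1) - x t) - L‖ := norm_sub_le _ _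
    _ ≤ 0 + δ := by linarith

end

theorem ContDiff.continuous_gradient {F : Type*} [NormedAddCommGroup F] [InnerProductSpace ℝ F]
    [CompleteSpace F] {f : F → ℝ} (hf : ContDiff ℝ 1 f) : Continuous (gradient f) :=
  (InnerProductSpace.toDual ℝ F).symm.continuous.comp (hf.continuous_fderiv one_ne_zero)

theorem continuous_vsq (d : ℕ) : Continuous (vsq d) :=
  (PiLp.continuous_toLp 2 _).comp (continuous_pi fun i => (PiLp.continuous_apply 2 _ i).pow 2)

theorem tendsto_one_sub_exp_neg_mul {c : ℝ} (hc : 0 < c) :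
    Tendsto (fun t => 1 - exp (-c * t)) atTop (𝓝 1) := by
  simpa using tendsto_const_nhds.sub (tendsto_exp_neg_mul_sub hc 0)

noncomputable def adamGLimit (ε : ℝ) (d : ℕ) (g : EuclideanSpace ℝ (Fin d)) :
    EuclideanSpace ℝ (Fin d) :=
  WithLp.toLp 2 fun i => g i / (|g i| + ε)

theorem adamGLimit_eq_zero_iff {ε : ℝ} (hε : 0 < ε) {d : ℕ} {g : EuclideanSpace ℝ (Fin d)} :
    adamGLimit ε d g = 0 ↔ g = 0 := by
  refine ⟨fun h => ?_, fun h => by ext i; simp [h, adamGLimit]⟩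
  ext i
  have hi : g i / (|g i| + ε) = 0 := congrArg (· i) h
  exact (div_eq_zero_iff.1 hi).resolve_right (by positivity)

theorem tendsto_adamG {α β ε : ℝ} (hα : α < 1) (hβ : β < 1) (hε : 0 < ε) {d : ℕ}
    {m v : ℝ → EuclideanSpace ℝ (Fin d)} {g : EuclideanSpace ℝ (Fin d)}
    (hm : Tendsto m atTop (𝓝 g)) (hv : Tendsto v atTop (𝓝 (vsq d g))) :
    Tendsto (fun t => adamG α β ε d t (m t) (v t)) atTop (𝓝 (adamGLimit ε d g)) := by
  refine ((PiLp.continuous_toLp 2 _).tendsto _).comp (tendsto_pi_nhds.2 fun i => ?_)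
  have hmi : Tendsto (fun t => m t i) atTop (𝓝 (g i)) :=
    ((PiLp.continuous_apply 2 _ i).tendsto g).comp hm
  have hvi : Tendsto (fun t => v t i) atTop (𝓝 (g i ^ 2)) :=
    ((PiLp.continuous_apply 2 _ i).tendsto _).comp hv
  have hnum := hmi.div (tendsto_one_sub_exp_neg_mul (sub_pos.2 hα)) one_ne_zero
  have hden :=
    ((hvi.div (tendsto_one_sub_exp_neg_mul (sub_pos.2 hβ)) one_ne_zero).sqrt).add_const ε
  rw [div_one] at hnum
  rw [div_one, sqrt_sq_eq_abs] at hden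
  exact hnum.div hden (by positivity)

theorem adam_limit_is_critical_point_general
    (d : ℕ) (α β ε η : ℝ)
    (hα : α ∈ Set.Ico (0 : ℝ) 1) (hβ : β ∈ Set.Ico (0 : ℝ) 1) (hε : 0 < ε) (hη : 0 < η)
    (f : EuclideanSpace ℝ (Fin d) → ℝ) (hf : ContDiff ℝ 1 f)
    (x m v : ℝ → EuclideanSpace ℝ (Fin d))
    (hm : ∀ t > (0 : ℝ), HasDerivAt m ((1 - α) • (gradient f (x t) - m t)) t)
    (hv : ∀ t > (0 : ℝ), HasDerivAt v ((1 - β) • (vsq d (gradient f (x t)) - v t)) t)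
    (hx : ∀ t > (0 : ℝ), HasDerivAt x ((-η) • adamG α β ε d t (m t) (v t)) t)
    (xs : EuclideanSpace ℝ (Fin d)) (hconv : Tendsto x atTop (nhds xs)) :
    gradient f xs = 0 ∧ (∀ᵐ y ∂(Measure.dirac xs), gradient f y = 0) := by
  have hpos : ∀ᶠ t : ℝ in atTop, 0 < t := eventually_gt_atTop 0
  have hgrad : Tendsto (fun t => gradient f (x t)) atTop (𝓝 (gradient f xs)) :=
    (hf.continuous_gradient.tendsto xs).comp hconv
  have hm_lim := tendsto_of_hasDerivAt_relax (sub_pos.2 hα.2) (hpos.mono hm) hgrad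
  have hv_lim := tendsto_of_hasDerivAt_relax (sub_pos.2 hβ.2) (hpos.mono hv)
    (((continuous_vsq d).tendsto _).comp hgrad)
  have hvel := eq_zero_of_tendsto_of_hasDerivAt_tendsto (hpos.mono hx)
    ((tendsto_adamG hα.2 hβ.2 hε hm_lim hv_lim).const_smul (-η)) hconv
  have hcrit : gradient f xs = 0 :=
    (adamGLimit_eq_zero_iff hε).1 ((smul_eq_zero.1 hvel).resolve_left (neg_ne_zero.2 hη.ne'))
  exact ⟨hcrit, by rw [ae_dirac_eq]; exact eventually_pure.2 hcrit⟩

/-- **Theorem 1 in the Dirac-measure case** (via the equivalence of Propositions 1 and 2).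
Let `f` be `C¹` and bounded below, `4α − β < 3`, and let `(x, m, v)` be a solution of the
Adam ODE system on `[0,∞)` with initial condition `(x₀, 0, 0)`, differentiable on `(0,∞)`,
with `v(t)` entrywise strictly positive for `t > 0`. If `x(t) → x*` as `t → ∞`, then
`∇f(x*) = 0`; equivalently, the limiting Dirac measure `δ_{x*}` is a critical point of the
potential energy functional `F_f[μ] = ∫ f dμ`, whose Wasserstein gradient is `∇f` (i.e.
`∇f = 0` holds `δ_{x*}`-almost everywhere). -/
theorem adam_limit_is_critical_point
    (d : ℕ) (α β ε η : ℝ)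
    (hα : α ∈ Set.Ico (0 : ℝ) 1) (hβ : β ∈ Set.Ico (0 : ℝ) 1) (hε : 0 < ε) (hη : 0 < η)
    (hcond : 4 * α - β < 3)
    (f : EuclideanSpace ℝ (Fin d) → ℝ) (hf : ContDiff ℝ 1 f)
    (Flb : ℝ) (hFlb : ∀ y, Flb ≤ f y)
    (x m v : ℝ → EuclideanSpace ℝ (Fin d)) (x₀ : EuclideanSpace ℝ (Fin d))
    (hx0 : x 0 = x₀) (hm0 : m 0 = 0) (hv0 : v 0 = 0)
    (hcx : ContinuousOn x (Set.Ici 0)) (hcm : ContinuousOn m (Set.Ici 0))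
    (hcv : ContinuousOn v (Set.Ici 0))
    (hvpos : ∀ t > (0 : ℝ), ∀ i, 0 < v t i)
    (hm : ∀ t > (0 : ℝ), HasDerivAt m ((1 - α) • (gradient f (x t) - m t)) t)
    (hv : ∀ t > (0 : ℝ), HasDerivAt v ((1 - β) • (vsq d (gradient f (x t)) - v t)) t)
    (hx : ∀ t > (0 : ℝ), HasDerivAt x ((-η) • adamG α β ε d t (m t) (v t)) t)
    (xs : EuclideanSpace ℝ (Fin d)) (hconv : Tendsto x atTop (nhds xs)) :
    gradient f xs = 0 ∧ (∀ᵐ y ∂(Measure.dirac xs), gradient f y = 0) :=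
  adam_limit_is_critical_point_general d α β ε η hα hβ hε hη f hf x m v hm hv hx xs hconv
end
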